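/- arXiv:1506.06915 — 5 statements merged into one kernel-verified Lean document; each statement's English description precedes it below -/
import Mathlib

section
/- Continuous dependence on the damping coefficient (scalar case): let λ > 0, T > 0, and let δ₁, δ₂ : [0,T] → [0,∞) be bounded measurable. If u₁ and u₂ solve uᵢ'' + 2δᵢ(t)uᵢ' + λ²uᵢ = 0 with the same initial data u₁(0) = u₂(0) = a, u₁'(0) = u₂'(0) = b, then for all t ∈ [0,T], |u₂'(t) − u₁'(t)|² + λ²|u₂(t) − u₁(t)|² ≤ 2(b² + λ²a²)·e^{2t}·∫₀ᵗ |δ₂(s) − δ₁(s)|² ds. -/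
/-!
The difference `w = u₂ - u₁` solves the damped equation with coefficient `δ₂` forced by
`-2 (δ₂ - δ₁) u₁'`. Its energy `E = w'² + λ² w²` therefore satisfies
`E' = -4 δ₂ w'² - 4 (δ₂ - δ₁) u₁' w' ≤ 2 E + 2 (δ₂ - δ₁)² u₁'²`, and `u₁'²` is bounded by the
initial energy `b² + λ² a²` of `u₁`, which does not increase since `δ₁ ≥ 0`.
Grönwall's inequality with `E(0) = 0` gives the bound.
-/

open Set Real MeasureTheory

/-- The velocity `v` is an argument of its own so that the energy of `u₂ - u₁` can use the
velocity `deriv u₂ - deriv u₁`. -/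
def oscillatorEnergy (lam : ℝ) (u v : ℝ → ℝ) (t : ℝ) : ℝ :=
  v t ^ 2 + lam ^ 2 * u t ^ 2

theorem hasDerivAt_oscillatorEnergy {lam t a : ℝ} {u v : ℝ → ℝ} (hu : HasDerivAt u (v t) t)
    (hv : HasDerivAt v a t) :
    HasDerivAt (oscillatorEnergy lam u v) (2 * v t * (a + lam ^ 2 * u t)) t := by
  refine ((hv.fun_pow 2).add ((hu.fun_pow 2).const_mul (lam ^ 2))).congr_deriv ?_
  push_cast
  ring

theorem ContDiff.hasDerivAt_deriv_of_two {u : ℝ → ℝ} (hu : ContDiff ℝ 2 u) (t : ℝ) :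
    HasDerivAt (deriv u) (deriv (deriv u) t) t :=
  (hu.differentiable_deriv_two t).hasDerivAt

theorem ContDiff.hasDerivAt_oscillatorEnergy {lam : ℝ} {u : ℝ → ℝ} (hu : ContDiff ℝ 2 u)
    (t : ℝ) :
    HasDerivAt (oscillatorEnergy lam u (deriv u))
      (2 * deriv u t * (deriv (deriv u) t + lam ^ 2 * u t)) t :=
  _root_.hasDerivAt_oscillatorEnergy (hu.differentiable two_ne_zero t).hasDerivAt
    (hu.hasDerivAt_deriv_of_two t)

theorem ContDiff.hasDerivAt_oscillatorEnergy_sub {lam : ℝ} {u₁ u₂ : ℝ → ℝ}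
    (hu₁ : ContDiff ℝ 2 u₁) (hu₂ : ContDiff ℝ 2 u₂) (t : ℝ) :
    HasDerivAt (oscillatorEnergy lam (u₂ - u₁) (deriv u₂ - deriv u₁))
      (2 * (deriv u₂ t - deriv u₁ t) *
        (deriv (deriv u₂) t - deriv (deriv u₁) t + lam ^ 2 * (u₂ t - u₁ t))) t :=
  _root_.hasDerivAt_oscillatorEnergy
    ((hu₂.differentiable two_ne_zero t).hasDerivAt.sub
      (hu₁.differentiable two_ne_zero t).hasDerivAt)
    ((hu₂.hasDerivAt_deriv_of_two t).sub (hu₁.hasDerivAt_deriv_of_two t))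

theorem antitoneOn_oscillatorEnergy {lam a b : ℝ} {u δ : ℝ → ℝ} (hu : ContDiff ℝ 2 u)
    (hδ : ∀ t ∈ Icc a b, 0 ≤ δ t)
    (hode : ∀ t ∈ Icc a b, deriv (deriv u) t + 2 * δ t * deriv u t + lam ^ 2 * u t = 0) :
    AntitoneOn (oscillatorEnergy lam u (deriv u)) (Icc a b) := by
  refine antitoneOn_of_hasDerivWithinAt_nonpos (convex_Icc a b)
    (fun t _ ↦ (hu.hasDerivAt_oscillatorEnergy t).continuousAt.continuousWithinAt)
    (fun t _ ↦ (hu.hasDerivAt_oscillatorEnergy t).hasDerivWithinAt) fun t ht ↦ ?_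
  have ht : t ∈ Icc a b := interior_subset ht
  have hrhs : deriv (deriv u) t + lam ^ 2 * u t = -2 * δ t * deriv u t := by
    linarith [hode t ht]
  rw [hrhs]
  nlinarith [mul_nonneg (hδ t ht) (sq_nonneg (deriv u t))]

theorem sq_deriv_le_oscillatorEnergy_of_damped {lam a b s : ℝ} {u δ : ℝ → ℝ}
    (hu : ContDiff ℝ 2 u) (hδ : ∀ t ∈ Icc a b, 0 ≤ δ t)
    (hode : ∀ t ∈ Icc a b, deriv (deriv u) t + 2 * δ t * deriv u t + lam ^ 2 * u t = 0)
    (hs : s ∈ Icc a b) :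
    deriv u s ^ 2 ≤ oscillatorEnergy lam u (deriv u) a := by
  have h := antitoneOn_oscillatorEnergy hu hδ hode (left_mem_Icc.2 (hs.1.trans hs.2)) hs hs.1
  unfold oscillatorEnergy at h ⊢
  nlinarith [sq_nonneg (lam * u s)]

/-- `xᵢ`, `vᵢ`, `aᵢ` are position, velocity and acceleration of two damped oscillators at one
instant. -/
theorem energy_rate_sub_le_of_damped {lam K δ₁ δ₂ x₁ x₂ v₁ v₂ a₁ a₂ : ℝ} (hδ₂ : 0 ≤ δ₂)
    (hv₁ : v₁ ^ 2 ≤ K) (h₁ : a₁ + 2 * δ₁ * v₁ + lam ^ 2 * x₁ = 0)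
    (h₂ : a₂ + 2 * δ₂ * v₂ + lam ^ 2 * x₂ = 0) :
    2 * (v₂ - v₁) * (a₂ - a₁ + lam ^ 2 * (x₂ - x₁)) ≤
      2 * ((v₂ - v₁) ^ 2 + lam ^ 2 * (x₂ - x₁) ^ 2) + 2 * K * (δ₂ - δ₁) ^ 2 := by
  have hw : a₂ - a₁ + lam ^ 2 * (x₂ - x₁) = -2 * δ₂ * (v₂ - v₁) - 2 * (δ₂ - δ₁) * v₁ := by
    linarith
  rw [hw]
  nlinarith [mul_nonneg hδ₂ (sq_nonneg (v₂ - v₁)), sq_nonneg (v₂ - v₁ + (δ₂ - δ₁) * v₁),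
    mul_le_mul_of_nonneg_left hv₁ (sq_nonneg (δ₂ - δ₁)), sq_nonneg (lam * (x₂ - x₁))]

theorem integrableOn_sq_sub_of_nonneg_of_le {α : Type*} [MeasurableSpace α] {μ : Measure α}
    {s : Set α} {f g : α → ℝ} {M₁ M₂ : ℝ} (hμs : μ s ≠ ⊤) (hs : MeasurableSet s)
    (hf : Measurable f) (hg : Measurable g) (hf₀ : ∀ x ∈ s, 0 ≤ f x) (hg₀ : ∀ x ∈ s, 0 ≤ g x)
    (hfM : ∀ x ∈ s, f x ≤ M₁) (hgM : ∀ x ∈ s, g x ≤ M₂) :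
    IntegrableOn (fun x ↦ (g x - f x) ^ 2) s μ := by
  refine Measure.integrableOn_of_bounded (M := M₁ ^ 2 + M₂ ^ 2) hμs
    (by fun_prop : Measurable _).aestronglyMeasurable
    (ae_restrict_of_forall_mem hs fun x hx ↦ ?_)
  rw [Real.norm_eq_abs, abs_sq]
  nlinarith [hf₀ x hx, hg₀ x hx, hfM x hx, hgM x hx]

/-- Grönwall's inequality with a forcing term `g` that need only be integrable. -/
theorem le_exp_mul_add_integral_of_hasDerivAt {E E' g : ℝ → ℝ} {c a b : ℝ} (hc : 0 ≤ c)
    (hab : a ≤ b) (hE : ∀ s ∈ Icc a b, HasDerivAt E (E' s) s) (hg : IntegrableOn g (Icc a b))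
    (hg₀ : ∀ s ∈ Ioo a b, 0 ≤ g s) (hle : ∀ s ∈ Ioo a b, E' s ≤ c * E s + g s) :
    E b ≤ exp (c * (b - a)) * (E a + ∫ s in a..b, g s) := by
  set H : ℝ → ℝ := fun s ↦ exp (-c * (s - a)) * E s
  have hH : ∀ s ∈ Icc a b, HasDerivAt H (exp (-c * (s - a)) * (E' s - c * E s)) s := by
    intro s hs
    have hexp : HasDerivAt (fun s ↦ exp (-c * (s - a))) (exp (-c * (s - a)) * -c) s := by
      simpa using (((hasDerivAt_id s).sub_const a).const_mul (-c)).exp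
    exact (hexp.mul (hE s hs)).congr_deriv (by ring)
  have hHle : H b - H a ≤ ∫ s in a..b, g s := by
    refine intervalIntegral.sub_le_integral_of_hasDeriv_right_of_le hab
      (fun s hs ↦ (hH s hs).continuousAt.continuousWithinAt)
      (fun s hs ↦ (hH s (Ioo_subset_Icc_self hs)).hasDerivWithinAt) hg fun s hs ↦ ?_
    have hfac : exp (-c * (s - a)) ≤ 1 := exp_le_one_iff.mpr (by nlinarith [hs.1])
    calc exp (-c * (s - a)) * (E' s - c * E s)
        ≤ exp (-c * (s - a)) * g s := by gcongr; linarith [hle s hs]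
      _ ≤ g s := mul_le_of_le_one_left (hg₀ s hs) hfac
  have hHb : E b = exp (c * (b - a)) * H b := by
    simp only [H, ← mul_assoc, ← exp_add]
    rw [neg_mul, add_neg_cancel, exp_zero, one_mul]
  have hHa : H a = E a := by simp [H]
  rw [hHb]
  gcongr
  linarith

theorem stmt_6_general (lam T : ℝ)
    (δ₁ δ₂ : ℝ → ℝ) (hmeas₁ : Measurable δ₁) (hmeas₂ : Measurable δ₂)
    (hnn₁ : ∀ t ∈ Set.Icc (0:ℝ) T, 0 ≤ δ₁ t)
    (hnn₂ : ∀ t ∈ Set.Icc (0:ℝ) T, 0 ≤ δ₂ t)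
    (hbdd₁ : ∃ M, ∀ t ∈ Set.Icc (0:ℝ) T, δ₁ t ≤ M)
    (hbdd₂ : ∃ M, ∀ t ∈ Set.Icc (0:ℝ) T, δ₂ t ≤ M)
    (a b : ℝ) (u₁ u₂ : ℝ → ℝ)
    (hu₁ : ContDiff ℝ 2 u₁) (hu₂ : ContDiff ℝ 2 u₂)
    (hode₁ : ∀ t ∈ Set.Icc (0:ℝ) T,
      deriv (deriv u₁) t + 2 * δ₁ t * deriv u₁ t + lam ^ 2 * u₁ t = 0)
    (hode₂ : ∀ t ∈ Set.Icc (0:ℝ) T,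
      deriv (deriv u₂) t + 2 * δ₂ t * deriv u₂ t + lam ^ 2 * u₂ t = 0)
    (hinit₁ : u₁ 0 = a ∧ deriv u₁ 0 = b)
    (hinit₂ : u₂ 0 = a ∧ deriv u₂ 0 = b) :
    ∀ t ∈ Set.Icc (0:ℝ) T,
      (deriv u₂ t - deriv u₁ t) ^ 2 + lam ^ 2 * (u₂ t - u₁ t) ^ 2 ≤
        2 * (b ^ 2 + lam ^ 2 * a ^ 2) * Real.exp (2 * t) *
          ∫ s in (0:ℝ)..t, (δ₂ s - δ₁ s) ^ 2 := by
  obtain ⟨M₁, hM₁⟩ := hbdd₁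
  obtain ⟨M₂, hM₂⟩ := hbdd₂
  rintro t ⟨ht₀, htT⟩
  have hsub : Icc 0 t ⊆ Icc 0 T := Icc_subset_Icc_right htT
  set K := b ^ 2 + lam ^ 2 * a ^ 2
  have hK : ∀ s ∈ Icc 0 t, deriv u₁ s ^ 2 ≤ K := fun s hs ↦ by
    simpa [oscillatorEnergy, hinit₁] using
      sq_deriv_le_oscillatorEnergy_of_damped hu₁ hnn₁ hode₁ (hsub hs)
  have hD : IntegrableOn (fun s ↦ (δ₂ s - δ₁ s) ^ 2) (Icc 0 t) :=
    (integrableOn_sq_sub_of_nonneg_of_le measure_Icc_lt_top.ne measurableSet_Icc hmeas₁ hmeas₂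
      hnn₁ hnn₂ hM₁ hM₂).mono_set hsub
  have key := le_exp_mul_add_integral_of_hasDerivAt (c := 2)
    (g := fun s ↦ 2 * K * (δ₂ s - δ₁ s) ^ 2) zero_le_two ht₀
    (fun s _ ↦ hu₁.hasDerivAt_oscillatorEnergy_sub hu₂ s) (hD.const_mul (2 * K))
    (fun s _ ↦ by positivity) fun s hs ↦ by
      have hs' := Ioo_subset_Icc_self hs
      exact energy_rate_sub_le_of_damped (hnn₂ s (hsub hs')) (hK s hs') (hode₁ s (hsub hs'))
        (hode₂ s (hsub hs'))
  have hE₀ : oscillatorEnergy lam (u₂ - u₁) (deriv u₂ - deriv u₁) 0 = 0 := by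
    simp [oscillatorEnergy, hinit₁, hinit₂]
  rw [hE₀, zero_add, sub_zero, intervalIntegral.integral_const_mul] at key
  calc _ = oscillatorEnergy lam (u₂ - u₁) (deriv u₂ - deriv u₁) t := rfl
    _ ≤ _ := key
    _ = _ := by ring

/-- Continuous dependence on the damping coefficient (scalar case). -/
theorem stmt_6 (lam T : ℝ) (hlam : 0 < lam) (hT : 0 < T)
    (δ₁ δ₂ : ℝ → ℝ) (hmeas₁ : Measurable δ₁) (hmeas₂ : Measurable δ₂)
    (hnn₁ : ∀ t ∈ Set.Icc (0:ℝ) T, 0 ≤ δ₁ t)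
    (hnn₂ : ∀ t ∈ Set.Icc (0:ℝ) T, 0 ≤ δ₂ t)
    (hbdd₁ : ∃ M, ∀ t ∈ Set.Icc (0:ℝ) T, δ₁ t ≤ M)
    (hbdd₂ : ∃ M, ∀ t ∈ Set.Icc (0:ℝ) T, δ₂ t ≤ M)
    (a b : ℝ) (u₁ u₂ : ℝ → ℝ)
    (hu₁ : ContDiff ℝ 2 u₁) (hu₂ : ContDiff ℝ 2 u₂)
    (hode₁ : ∀ t ∈ Set.Icc (0:ℝ) T,
      deriv (deriv u₁) t + 2 * δ₁ t * deriv u₁ t + lam ^ 2 * u₁ t = 0)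
    (hode₂ : ∀ t ∈ Set.Icc (0:ℝ) T,
      deriv (deriv u₂) t + 2 * δ₂ t * deriv u₂ t + lam ^ 2 * u₂ t = 0)
    (hinit₁ : u₁ 0 = a ∧ deriv u₁ 0 = b)
    (hinit₂ : u₂ 0 = a ∧ deriv u₂ 0 = b) :
    ∀ t ∈ Set.Icc (0:ℝ) T,
      (deriv u₂ t - deriv u₁ t) ^ 2 + lam ^ 2 * (u₂ t - u₁ t) ^ 2 ≤
        2 * (b ^ 2 + lam ^ 2 * a ^ 2) * Real.exp (2 * t) *
          ∫ s in (0:ℝ)..t, (δ₂ s - δ₁ s) ^ 2 :=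
  stmt_6_general lam T δ₁ δ₂ hmeas₁ hmeas₂ hnn₁ hnn₂ hbdd₁ hbdd₂ a b u₁ u₂ hu₁ hu₂ hode₁ hode₂
    hinit₁ hinit₂
end

section
/- Slow solution under overdamping: let λ > 0 and let δ : [0,∞) → [0,∞) be continuous with δ(t) ≥ λ for all t ≥ T, for some T ≥ 0. Then there exist T* ≥ T and a solution u of u'' + 2δ(t)u' + λ²u = 0 with |u(t)| ≥ t·e^{−λt} for all t ≥ T*. -/
/-!
Take `a = max T λ⁻¹` and let `u` solve the equation with the initial data of the critically damped
solution `w t = t e^{-λt}` of `w'' + 2λw' + λ²w = 0` at `a`. On `[a, ∞)` we have `w > 0`, `w' ≤ 0`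
and `δ ≥ λ`, so as long as `u > 0` the Wronskian `W = u'w - uw'` satisfies `W' + 2δW ≥ 0` with
`W(a) = 0`. Hence `W ≥ 0`, i.e. `u / w` is nondecreasing and `u ≥ w`; in particular `u` never
vanishes on `[a, ∞)`. Solutions exist globally because the equation is a linear system with
continuous coefficients: on a compact time interval Picard–Lindelöf steps have a uniform length.
-/

open Set Filter Topology Real
open scoped NNReal

section LinearODE

variable {E : Type*} [NormedAddCommGroup E] [NormedSpace ℝ E]

lemma IsIntegralCurveOn.piecewise_Icc {v : ℝ → E → E} {f g : ℝ → E} {a b c : ℝ}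
    (hac : a ≤ c) (hcb : c ≤ b) (hf : IsIntegralCurveOn f v (Icc a c))
    (hg : IsIntegralCurveOn g v (Icc c b)) (hfg : f c = g c) :
    IsIntegralCurveOn (fun t => if t ≤ c then f t else g t) v (Icc a b) := by
  set F : ℝ → E := fun t => if t ≤ c then f t else g t
  have hFf : EqOn F f (Icc a c) := fun t ht => if_pos ht.2
  have hFg : EqOn F g (Icc c b) := fun t ht => by
    rcases ht.1.eq_or_lt with rfl | hlt
    · exact (if_pos le_rfl).trans hfg
    · exact if_neg hlt.not_ge
  -- outside a closed set `s`, any derivative within `s` holds vacuously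
  have piece : ∀ {h : ℝ → E} {s : Set ℝ}, IsClosed s → EqOn F h s →
      IsIntegralCurveOn h v s → ∀ t, HasDerivWithinAt F (v t (F t)) s t := by
    intro h s hs hFh hh t
    by_cases ht : t ∈ s
    · rw [hFh ht]
      exact (hh t ht).congr hFh (hFh ht)
    · exact HasFDerivWithinAt.of_notMem_closure (hs.closure_eq.symm ▸ ht)
  intro t _
  rw [← Icc_union_Icc_eq_Icc hac hcb]
  exact (piece isClosed_Icc hFf hf t).union (piece isClosed_Icc hFg hg t)

variable [CompleteSpace E] {A : ℝ → E →L[ℝ] E} {a b t₀ : ℝ}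

lemma exists_isIntegralCurveOn_Icc_clm_of_mul_le (hA : ContinuousOn A (Icc a b)) {K : ℝ≥0}
    (hK : ∀ t ∈ Icc a b, ‖A t‖₊ ≤ K) (hab : K * (b - a) ≤ 1 / 2) (ht₀ : t₀ ∈ Icc a b) (x₀ : E) :
    ∃ f : ℝ → E, f t₀ = x₀ ∧ IsIntegralCurveOn f (fun t x => A t x) (Icc a b) := by
  -- on the ball of radius `‖x₀‖` around `x₀` the field is bounded by `2 K ‖x₀‖`
  have hpl : IsPicardLindelof (fun t x => A t x) (tmin := a) (tmax := b) ⟨t₀, ht₀⟩ x₀ ‖x₀‖₊ 0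
      (2 * K * ‖x₀‖₊) K := by
    refine ⟨fun t ht => ((A t).lipschitz.weaken (hK t ht)).lipschitzOnWith,
      fun _ _ => hA.clm_apply continuousOn_const, fun t ht x hx => ?_, ?_⟩
    · have hx' : ‖x‖ ≤ 2 * ‖x₀‖ := by
        have := norm_le_norm_add_norm_sub' x x₀
        have := mem_closedBall_iff_norm.1 hx
        push_cast at this
        linarith
      calc ‖A t x‖ ≤ ‖A t‖ * ‖x‖ := (A t).le_opNorm x
        _ ≤ K * (2 * ‖x₀‖) := by gcongr; exact hK t ht
        _ = _ := by push_cast; ring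
    · have hmax : max (b - t₀) (t₀ - a) ≤ b - a :=
        max_le (by linarith [ht₀.1]) (by linarith [ht₀.2])
      push_cast
      calc 2 * K * ‖x₀‖ * max (b - t₀) (t₀ - a) = 2 * ‖x₀‖ * (K * max (b - t₀) (t₀ - a)) := by
            ring
        _ ≤ 2 * ‖x₀‖ * (K * (b - a)) := by gcongr
        _ ≤ 2 * ‖x₀‖ * (1 / 2) := by gcongr
        _ = ‖x₀‖ - 0 := by ring
  exact hpl.exists_eq_forall_mem_Icc_hasDerivWithinAt₀

lemma exists_isIntegralCurveOn_Icc_clm (hA : ContinuousOn A (Icc a b)) (ht₀ : t₀ ∈ Icc a b)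
    (x₀ : E) : ∃ f : ℝ → E, f t₀ = x₀ ∧ IsIntegralCurveOn f (fun t x => A t x) (Icc a b) := by
  obtain ⟨K, hK⟩ := (isCompact_Icc.image_of_continuousOn hA.nnnorm).bddAbove
  set h : ℝ := 1 / (2 * (K + 1))
  have hh : 0 < h := by positivity
  have hKh : K * h ≤ 1 / 2 := by
    rw [mul_one_div, div_le_div_iff₀ (by positivity) two_pos]
    linarith
  have step : ∀ n : ℕ, ∀ a' b', a ≤ a' → b' ≤ b → b' - a' ≤ n * h → ∀ t₀ ∈ Icc a' b', ∀ x₀ : E,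
      ∃ f : ℝ → E, f t₀ = x₀ ∧ IsIntegralCurveOn f (fun t x => A t x) (Icc a' b') := by
    intro n
    induction n with
    | zero =>
      intro a' b' ha' hb' hlen t₀ ht₀ x₀
      refine exists_isIntegralCurveOn_Icc_clm_of_mul_le (hA.mono (Icc_subset_Icc ha' hb'))
        (fun t ht => hK (mem_image_of_mem _ ⟨ha'.trans ht.1, ht.2.trans hb'⟩)) ?_ ht₀ x₀
      push_cast at hlen
      nlinarith [K.coe_nonneg]
    | succ n ih =>
      intro a' b' ha' hb' hlen t₀ ht₀ x₀
      set m := max a' (b' - h)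
      have ham : a' ≤ m := le_max_left _ _
      have hmb : m ≤ b' := max_le (ht₀.1.trans ht₀.2) (by linarith)
      have hleft : m - a' ≤ n * h := by
        push_cast at hlen
        rw [sub_le_iff_le_add]
        exact max_le (by nlinarith [n.cast_nonneg (α := ℝ)]) (by linarith)
      have hshort : ∀ s ∈ Icc m b', ∀ y : E, ∃ g : ℝ → E, g s = y ∧
          IsIntegralCurveOn g (fun t x => A t x) (Icc m b') := fun s hs y =>
        exists_isIntegralCurveOn_Icc_clm_of_mul_le (hA.mono (Icc_subset_Icc (ha'.trans ham) hb'))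
          (fun t ht => hK (mem_image_of_mem _ ⟨(ha'.trans ham).trans ht.1, ht.2.trans hb'⟩))
          (hKh.trans' (by gcongr; linarith [le_max_right a' (b' - h)])) hs y
      rcases le_or_gt t₀ m with htm | hmt
      · obtain ⟨f, hf₀, hf⟩ := ih a' m ha' (hmb.trans hb') hleft t₀ ⟨ht₀.1, htm⟩ x₀
        obtain ⟨g, hg₀, hg⟩ := hshort m ⟨le_rfl, hmb⟩ (f m)
        exact ⟨_, by simp [htm, hf₀], hf.piecewise_Icc ham hmb hg hg₀.symm⟩
      · obtain ⟨g, hg₀, hg⟩ := hshort t₀ ⟨hmt.le, ht₀.2⟩ x₀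
        obtain ⟨f, hf₀, hf⟩ := ih a' m ha' (hmb.trans hb') hleft m ⟨ham, le_rfl⟩ (g m)
        exact ⟨_, by simp [hmt.not_ge, hg₀], hf.piecewise_Icc ham hmb hg hf₀⟩
  obtain ⟨n, hn⟩ := exists_nat_ge ((b - a) / h)
  exact step n a b le_rfl le_rfl ((div_le_iff₀ hh).1 hn) t₀ ht₀ x₀

theorem exists_isIntegralCurve_clm (hA : Continuous A) (t₀ : ℝ) (x₀ : E) :
    ∃ f : ℝ → E, f t₀ = x₀ ∧ IsIntegralCurve f (fun t x => A t x) := by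
  have hmem : ∀ n : ℕ, t₀ ∈ Icc (t₀ - n) (t₀ + n) := fun n => by
    constructor <;> linarith [n.cast_nonneg (α := ℝ)]
  choose f hf₀ hf using fun n => exists_isIntegralCurveOn_Icc_clm hA.continuousOn (hmem n) x₀
  have hderiv : ∀ n : ℕ, ∀ t ∈ Ioo (t₀ - n) (t₀ + n), HasDerivAt (f n) (A t (f n t)) t :=
    fun n t ht => (hf n t (Ioo_subset_Icc_self ht)).hasDerivAt (Icc_mem_nhds ht.1 ht.2)
  have hagree : ∀ m n : ℕ, ∀ t ∈ Ioo (t₀ - m) (t₀ + m), t ∈ Ioo (t₀ - n) (t₀ + n) →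
      f m t = f n t := by
    intro m n
    wlog hmn : m ≤ n generalizing m n
    · exact fun t hm hn => (this n m (le_of_not_ge hmn) t hn hm).symm
    intro t hm _
    have hsub : Ioo (t₀ - m) (t₀ + m) ⊆ Ioo (t₀ - n) (t₀ + n) :=
      Ioo_subset_Ioo (by gcongr) (by gcongr)
    obtain ⟨K, hK⟩ := (isCompact_Icc.image_of_continuousOn
      (hA.continuousOn (s := Icc (t₀ - m) (t₀ + m))).nnnorm).bddAbove
    refine ODE_solution_unique_of_mem_Ioo (K := K) (s := fun _ => univ)
      (fun s hs => ((A s).lipschitz.weaken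
        (hK (mem_image_of_mem _ (Ioo_subset_Icc_self hs)))).lipschitzOnWith)
      ⟨by linarith [hm.1, hm.2], by linarith [hm.1, hm.2]⟩
      (fun s hs => ⟨hderiv m s hs, trivial⟩) (fun s hs => ⟨hderiv n s (hsub hs), trivial⟩)
      ((hf₀ m).trans (hf₀ n).symm) hm
  set N : ℝ → ℕ := fun t => ⌈|t - t₀|⌉₊ + 1
  have hN : ∀ t, t ∈ Ioo (t₀ - N t) (t₀ + N t) := by
    intro t
    have : |t - t₀| < N t := by
      push_cast [N]
      linarith [Nat.le_ceil |t - t₀|]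
    rw [abs_sub_lt_iff] at this
    constructor <;> linarith
  refine ⟨fun t => f (N t) t, hf₀ _, fun t => ?_⟩
  have hev : (fun s => f (N s) s) =ᶠ[𝓝 t] f (N t) :=
    eventually_of_mem (isOpen_Ioo.mem_nhds (hN t)) fun s hs => hagree _ _ s (hN s) hs
  exact (hderiv _ t (hN t)).congr_of_eventuallyEq hev

end LinearODE

lemma nonneg_of_hasDerivAt_add_mul_nonneg {W W' g : ℝ → ℝ} {a b : ℝ} (hg : Continuous g)
    (hW : ∀ t, HasDerivAt W (W' t) t) (hineq : ∀ t ∈ Ioo a b, 0 ≤ W' t + g t * W t)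
    (ha : 0 ≤ W a) : ∀ t ∈ Icc a b, 0 ≤ W t := by
  set D : ℝ → ℝ := fun t => ∫ s in a..t, g s
  have hD : ∀ t, HasDerivAt D (g t) t := fun t => (hg.integral_hasStrictDerivAt a t).hasDerivAt
  have hG : ∀ t, HasDerivAt (fun t => exp (D t) * W t) (exp (D t) * (W' t + g t * W t)) t :=
    fun t => ((hD t).exp.mul (hW t)).congr_deriv (by ring)
  have hmono : MonotoneOn (fun t => exp (D t) * W t) (Icc a b) := by
    refine monotoneOn_of_hasDerivWithinAt_nonneg (convex_Icc a b)
      (fun t _ => (hG t).continuousAt.continuousWithinAt) (fun t _ => (hG t).hasDerivWithinAt)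
      fun t ht => ?_
    rw [interior_Icc] at ht
    exact mul_nonneg (exp_pos _).le (hineq t ht)
  intro t ht
  have h := hmono (left_mem_Icc.2 (ht.1.trans ht.2)) ht ht.1
  simp only [D, intervalIntegral.integral_same, exp_zero, one_mul] at h
  exact (mul_nonneg_iff_of_pos_left (exp_pos _)).1 (ha.trans h)

/-- `(u, p)` solves `u' = p`, `p' = -2δp - κu`, i.e. `u'' + 2δu' + κu = 0`. -/
def IsDampedOscillation (δ κ u p : ℝ → ℝ) : Prop :=
  ∀ t, HasDerivAt u (p t) t ∧ HasDerivAt p (-(2 * δ t * p t) - κ t * u t) t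

namespace IsDampedOscillation

variable {δ γ κ u p w q : ℝ → ℝ}

lemma deriv_eq (h : IsDampedOscillation δ κ u p) : deriv u = p :=
  funext fun t => (h t).1.deriv

lemma deriv_deriv_add (h : IsDampedOscillation δ κ u p) (t : ℝ) :
    deriv (deriv u) t + 2 * δ t * deriv u t + κ t * u t = 0 := by
  rw [h.deriv_eq, (h t).2.deriv]
  ring

lemma contDiff_two (h : IsDampedOscillation δ κ u p) (hδ : Continuous δ) (hκ : Continuous κ) :
    ContDiff ℝ 2 u := by
  have hu : Differentiable ℝ u := fun t => (h t).1.differentiableAt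
  have hp : Differentiable ℝ p := fun t => (h t).2.differentiableAt
  rw [show (2 : WithTop ℕ∞) = 1 + 1 from rfl, contDiff_succ_iff_deriv, h.deriv_eq,
    contDiff_one_iff_deriv]
  refine ⟨hu, by simp, hp, ?_⟩
  rw [show deriv p = fun t => -(2 * δ t * p t) - κ t * u t from funext fun t => (h t).2.deriv]
  have := hu.continuous
  have := hp.continuous
  fun_prop

theorem exists_of_continuous (hδ : Continuous δ) (hκ : Continuous κ) (t₀ u₀ p₀ : ℝ) :
    ∃ u p, u t₀ = u₀ ∧ p t₀ = p₀ ∧ IsDampedOscillation δ κ u p := by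
  let fst := ContinuousLinearMap.fst ℝ ℝ ℝ
  let snd := ContinuousLinearMap.snd ℝ ℝ ℝ
  let A : ℝ → ℝ × ℝ →L[ℝ] ℝ × ℝ := fun t => snd.prod (-(2 * δ t) • snd - κ t • fst)
  have hA : Continuous A :=
    (ContinuousLinearMap.prodₗᵢ ℝ).continuous.comp (continuous_const.prodMk (by fun_prop))
  obtain ⟨f, hf₀, hf⟩ := exists_isIntegralCurve_clm hA t₀ (u₀, p₀)
  refine ⟨fun t => (f t).1, fun t => (f t).2, by simp [hf₀], by simp [hf₀], fun t => ⟨?_, ?_⟩⟩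
  · simpa [A, fst, snd, Function.comp_def] using fst.hasFDerivAt.comp_hasDerivAt t (hf t)
  · simpa [A, fst, snd, Function.comp_def] using snd.hasFDerivAt.comp_hasDerivAt t (hf t)

lemma continuous (h : IsDampedOscillation δ κ u p) : Continuous u :=
  continuous_iff_continuousAt.2 fun t => (h t).1.continuousAt

lemma le_of_forall_Ioo_pos {a b : ℝ} (hu : IsDampedOscillation δ κ u p)
    (hw : IsDampedOscillation γ κ w q) (hδ : Continuous δ) (hab : a ≤ b)
    (hγδ : ∀ t ∈ Ioo a b, γ t ≤ δ t) (hw₀ : ∀ t ∈ Icc a b, 0 < w t)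
    (hq : ∀ t ∈ Ioo a b, q t ≤ 0) (hu₀ : ∀ t ∈ Ioo a b, 0 < u t) (hua : u a = w a)
    (hpa : p a = q a) : w b ≤ u b := by
  have hW : ∀ t ∈ Icc a b, 0 ≤ p t * w t - u t * q t := by
    refine nonneg_of_hasDerivAt_add_mul_nonneg (hδ.const_mul 2)
      (fun t => ((hu t).2.mul (hw t).1).sub ((hu t).1.mul (hw t).2)) (fun t ht => ?_)
      (by rw [hua, hpa, mul_comm, sub_self])
    have key : 0 ≤ 2 * (δ t - γ t) * u t * -q t :=
      mul_nonneg (mul_nonneg (mul_nonneg two_pos.le (sub_nonneg.2 (hγδ t ht))) (hu₀ t ht).le)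
        (neg_nonneg.2 (hq t ht))
    linarith
  have hmono : MonotoneOn (fun t => u t / w t) (Icc a b) := by
    refine monotoneOn_of_hasDerivWithinAt_nonneg (f' := fun t => (p t * w t - u t * q t) / w t ^ 2)
      (convex_Icc a b)
      (fun t ht => ((hu t).1.div (hw t).1 (hw₀ t ht).ne').continuousAt.continuousWithinAt)
      (fun t ht => ?_) (fun t ht => ?_)
    · rw [interior_Icc] at ht
      exact ((hu t).1.div (hw t).1 (hw₀ t (Ioo_subset_Icc_self ht)).ne').hasDerivWithinAt
    · rw [interior_Icc] at ht
      exact div_nonneg (hW t (Ioo_subset_Icc_self ht)) (sq_nonneg _)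
  have h : u a / w a ≤ u b / w b := hmono (left_mem_Icc.2 hab) (right_mem_Icc.2 hab) hab
  rwa [hua, div_self (hw₀ a (left_mem_Icc.2 hab)).ne', one_le_div (hw₀ b (right_mem_Icc.2 hab))]
    at h

theorem le_of_forall_ge {a : ℝ} (hu : IsDampedOscillation δ κ u p)
    (hw : IsDampedOscillation γ κ w q) (hδ : Continuous δ) (hγδ : ∀ t ≥ a, γ t ≤ δ t)
    (hw₀ : ∀ t ≥ a, 0 < w t) (hq : ∀ t ≥ a, q t ≤ 0) (hua : u a = w a) (hpa : p a = q a) :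
    ∀ t ≥ a, w t ≤ u t := by
  have key : ∀ b ≥ a, (∀ t ∈ Ioo a b, 0 < u t) → w b ≤ u b := fun b hb hpos =>
    le_of_forall_Ioo_pos hu hw hδ hb (fun t ht => hγδ t ht.1.le) (fun t ht => hw₀ t ht.1)
      (fun t ht => hq t ht.1.le) hpos hua hpa
  -- `u` cannot vanish: at its first zero `b` after `a` we would get `0 < w b ≤ u b`
  have hpos : ∀ t ≥ a, 0 < u t := by
    by_contra! hneg
    set Z := Ici a ∩ {t | u t ≤ 0}
    have hZ : IsClosed Z := isClosed_Ici.inter (isClosed_le hu.continuous continuous_const)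
    have hbdd : BddBelow Z := ⟨a, fun t ht => ht.1⟩
    obtain ⟨hb, hub⟩ : sInf Z ∈ Z := hZ.csInf_mem hneg hbdd
    have hbefore : ∀ t ∈ Ioo a (sInf Z), 0 < u t := fun t ht =>
      lt_of_not_ge fun hut => (csInf_le hbdd ⟨ht.1.le, hut⟩).not_gt ht.2
    exact (hw₀ _ hb).not_ge ((key _ hb hbefore).trans hub)
  exact fun b hb => key b hb fun t ht => hpos t ht.1.le

end IsDampedOscillation

lemma isDampedOscillation_mul_exp (lam : ℝ) :
    IsDampedOscillation (fun _ => lam) (fun _ => lam ^ 2) (fun t => t * exp (-lam * t))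
      (fun t => exp (-lam * t) * (1 - lam * t)) := by
  intro t
  have hexp : HasDerivAt (fun s => exp (-lam * s)) (exp (-lam * t) * -lam) t := by
    simpa using ((hasDerivAt_id t).const_mul (-lam)).exp
  constructor
  · exact ((hasDerivAt_id' t).mul hexp).congr_deriv (by ring)
  · exact (hexp.mul (((hasDerivAt_id' t).const_mul lam).const_sub 1)).congr_deriv (by ring)

theorem stmt_11_general (lam T : ℝ) (hlam : 0 < lam)
    (δ : ℝ → ℝ) (hδc : Continuous δ)
    (hδge : ∀ t ≥ T, lam ≤ δ t) :
    ∃ Tstar : ℝ, T ≤ Tstar ∧ ∃ u : ℝ → ℝ, ContDiff ℝ 2 u ∧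
      (∀ t ≥ (0:ℝ),
        deriv (deriv u) t + 2 * δ t * deriv u t + lam ^ 2 * u t = 0) ∧
      ∀ t ≥ Tstar, t * Real.exp (-lam * t) ≤ |u t| := by
  set a := max T lam⁻¹
  have ha : lam⁻¹ ≤ a := le_max_right _ _
  have hw := isDampedOscillation_mul_exp lam
  obtain ⟨u, p, hua, hpa, hu⟩ := IsDampedOscillation.exists_of_continuous hδc continuous_const a
    (a * exp (-lam * a)) (exp (-lam * a) * (1 - lam * a))
  refine ⟨a, le_max_left _ _, u, hu.contDiff_two hδc continuous_const,
    fun t _ => hu.deriv_deriv_add t,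
    fun t ht => (hu.le_of_forall_ge hw hδc ?_ ?_ ?_ hua hpa t ht).trans (le_abs_self _)⟩
  · exact fun t ht => hδge t ((le_max_left _ _).trans ht)
  · exact fun t ht => mul_pos ((inv_pos.2 hlam).trans_le (ha.trans ht)) (exp_pos _)
  · intro t ht
    have : 1 ≤ lam * t := (inv_le_iff_one_le_mul₀' hlam).1 (ha.trans ht)
    exact mul_nonpos_of_nonneg_of_nonpos (exp_pos _).le (by linarith)

/-- Slow solution under overdamping: if `δ(t) ≥ λ` for `t ≥ T`, there exist
`T* ≥ T` and a solution `u` of `u'' + 2δ(t)u' + λ²u = 0` with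
`|u(t)| ≥ t e^{−λt}` for `t ≥ T*`. -/
theorem stmt_11 (lam T : ℝ) (hlam : 0 < lam) (hT : 0 ≤ T)
    (δ : ℝ → ℝ) (hδc : Continuous δ) (hδnonneg : ∀ t, 0 ≤ δ t)
    (hδge : ∀ t ≥ T, lam ≤ δ t) :
    ∃ Tstar : ℝ, T ≤ Tstar ∧ ∃ u : ℝ → ℝ, ContDiff ℝ 2 u ∧
      (∀ t ≥ (0:ℝ),
        deriv (deriv u) t + 2 * δ t * deriv u t + lam ^ 2 * u t = 0) ∧
      ∀ t ≥ Tstar, t * Real.exp (-lam * t) ≤ |u t| :=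
  stmt_11_general lam T hlam δ hδc hδge
end

section
/- Phase-space rotation with subcritical constant damping: let λ > 0, ε ∈ (0,λ), and let (α,β), (γ,δ₀) ∈ ℝ² be nonzero vectors. Then there exist r > 0 and t₂ with 0 < t₂ ≤ 2π/√(ε(2λ−ε)) such that the solution u of u'' + 2(λ−ε)u' + λ²u = 0 with u(0) = α, u'(0) = β satisfies u(t₂) = rγ and u'(t₂) = rδ₀. -/
/-!
Put `μ = λ - ε` and `ω = √(ε(2λ - ε))`, so that `λ² = μ² + ω²`. The complex amplitude
`z = u + i (u' + μ u) / ω` of a solution satisfies `z' = (-μ - iω) z`, hence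
`z(t) = e^{-μt} e^{-iωt} z(0)`: the phase point turns at constant angular speed `ω` while
shrinking, so within one turn, `t ≤ 2π/ω`, it points in the direction of any prescribed nonzero
`(γ, δ₀)`. As `(x, v) ↦ x + i (v + μ x) / ω` is an `ℝ`-linear isomorphism `ℝ² ≃ ℂ`, this transfers
back to `(u, u')`.
-/

open Complex

theorem eq_exp_mul_smul_of_hasDerivAt {E : Type*} [NormedAddCommGroup E] [NormedSpace ℂ E]
    {f : ℝ → E} {c : ℂ} (hf : ∀ t, HasDerivAt f (c • f t) t) (t : ℝ) :
    f t = exp (c * t) • f 0 := by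
  have hconst : ∀ s : ℝ, HasDerivAt (fun s : ℝ => exp (-(c * s)) • f s) 0 s := by
    intro s
    have hexp : HasDerivAt (fun s : ℝ => exp (-(c * s))) (exp (-(c * s)) * -c) s := by
      simpa using ((hasDerivAt_id (s : ℂ)).const_mul c).neg.cexp.comp_ofReal
    refine (hexp.smul (hf s)).congr_deriv ?_
    rw [smul_smul, ← add_smul, mul_neg, add_neg_cancel, zero_smul]
  have h := is_const_of_deriv_eq_zero (fun s => (hconst s).differentiableAt)
    (fun s => (hconst s).deriv) t 0
  simp only [ofReal_zero, mul_zero, neg_zero, exp_zero, one_smul] at h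
  rw [← h, smul_smul, ← exp_add, add_neg_cancel, exp_zero, one_smul]

theorem exists_exp_neg_mul_I_mul_eq_ofReal_mul {z w : ℂ} (hz : z ≠ 0) (hw : w ≠ 0) :
    ∃ θ ∈ Set.Ioc 0 (2 * Real.pi), ∃ r : ℝ, 0 < r ∧ exp (-(θ * I)) * z = r * w := by
  set φ := (z / w).arg
  set θ := toIocMod Real.two_pi_pos 0 φ
  refine ⟨θ, by simpa using toIocMod_mem_Ioc Real.two_pi_pos 0 φ,
    ‖z / w‖, norm_pos_iff.mpr (div_ne_zero hz hw), ?_⟩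
  have hwind : φ - θ = toIocDiv Real.two_pi_pos 0 φ * (2 * Real.pi) :=
    self_sub_toIocMod_eq_mul _ _ _
  have hunit : exp (-(θ * I)) * exp (φ * I) = 1 := by
    rw [← exp_add, neg_add_eq_sub, ← sub_mul, ← ofReal_sub, hwind]
    push_cast
    rw [mul_assoc, exp_int_mul_two_pi_mul_I]
  have hpolar : z = ‖z / w‖ * exp (φ * I) * w := by
    rw [norm_mul_exp_arg_mul_I, div_mul_cancel₀ _ hw]
  conv_lhs => rw [hpolar]
  linear_combination (‖z / w‖ * w : ℂ) * hunit

noncomputable def dampedPhase (μ ω x v : ℝ) : ℂ := x + ((v + μ * x) / ω : ℝ) * I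

section dampedPhase

variable {μ ω : ℝ}

theorem dampedPhase_ne_zero (hω : ω ≠ 0) {x v : ℝ} (h : x ^ 2 + v ^ 2 ≠ 0) :
    dampedPhase μ ω x v ≠ 0 := by
  intro h0
  have hx : x = 0 := by simpa [dampedPhase] using congrArg re h0
  have hv : (v + μ * x) / ω = 0 := by simpa [dampedPhase] using congrArg im h0
  rw [hx, mul_zero, add_zero, div_eq_zero_iff, or_iff_left hω] at hv
  exact h (by rw [hx, hv]; ring)

theorem eq_mul_of_dampedPhase_eq (hω : ω ≠ 0) {x v y w r : ℝ}
    (h : dampedPhase μ ω x v = r * dampedPhase μ ω y w) : x = r * y ∧ v = r * w := by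
  have hx : x = r * y := by simpa [dampedPhase] using congrArg re h
  have hv : (v + μ * x) / ω = r * ((w + μ * y) / ω) := by
    simpa [dampedPhase] using congrArg im h
  field_simp at hv
  exact ⟨hx, by linear_combination hv - μ * hx⟩

theorem hasDerivAt_dampedPhase (hω : ω ≠ 0) {u : ℝ → ℝ} (hu : ContDiff ℝ 2 u)
    (hode : ∀ t, deriv (deriv u) t + 2 * μ * deriv u t + (μ ^ 2 + ω ^ 2) * u t = 0) (t : ℝ) :
    HasDerivAt (fun t => dampedPhase μ ω (u t) (deriv u t))
      ((-μ - ω * I) * dampedPhase μ ω (u t) (deriv u t)) t := by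
  have hu₁ : HasDerivAt u (deriv u t) t := (hu.differentiable two_ne_zero t).hasDerivAt
  have hu₂ : HasDerivAt (deriv u) (deriv (deriv u) t) t :=
    ((hu.iterate_deriv' 1 1).differentiable one_ne_zero t).hasDerivAt
  refine (hu₁.ofReal_comp.add
    (((hu₂.add (hu₁.const_mul μ)).div_const ω).ofReal_comp.mul_const I)).congr_deriv ?_
  have hu'' : deriv (deriv u) t = -2 * μ * deriv u t - (μ ^ 2 + ω ^ 2) * u t := by
    linear_combination hode t
  rw [hu'']
  apply Complex.ext <;>
    simp only [dampedPhase, add_re, add_im, sub_re, sub_im, neg_re, neg_im, mul_re, mul_im,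
      ofReal_re, ofReal_im, I_re, I_im] <;>
    field_simp <;> ring

end dampedPhase

theorem stmt_13_general (lam ε : ℝ) (hε : 0 < ε) (hεlam : ε < lam)
    (α β γ δ₀ : ℝ) (hαβ : α ^ 2 + β ^ 2 ≠ 0) (hγδ : γ ^ 2 + δ₀ ^ 2 ≠ 0)
    (u : ℝ → ℝ) (hu : ContDiff ℝ 2 u)
    (hode : ∀ t,
      deriv (deriv u) t + 2 * (lam - ε) * deriv u t + lam ^ 2 * u t = 0)
    (hu0 : u 0 = α) (hu'0 : deriv u 0 = β) :
    ∃ r t₂ : ℝ, 0 < r ∧ 0 < t₂ ∧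
      t₂ ≤ 2 * Real.pi / Real.sqrt (ε * (2 * lam - ε)) ∧
      u t₂ = r * γ ∧ deriv u t₂ = r * δ₀ := by
  set μ := lam - ε
  set ω := Real.sqrt (ε * (2 * lam - ε))
  have hω : 0 < ω := Real.sqrt_pos.mpr (by nlinarith)
  have hlam_sq : lam ^ 2 = μ ^ 2 + ω ^ 2 := by
    rw [Real.sq_sqrt (by nlinarith)]; ring
  rw [hlam_sq] at hode
  have hflow := eq_exp_mul_smul_of_hasDerivAt (hasDerivAt_dampedPhase hω.ne' hu hode)
  obtain ⟨θ, ⟨hθ0, hθ2π⟩, r, hr, hrot⟩ := exists_exp_neg_mul_I_mul_eq_ofReal_mul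
    (dampedPhase_ne_zero (μ := μ) hω.ne' hαβ) (dampedPhase_ne_zero (μ := μ) hω.ne' hγδ)
  set t₂ := θ / ω
  have hphase : dampedPhase μ ω (u t₂) (deriv u t₂)
      = (Real.exp (-μ * t₂) * r : ℝ) * dampedPhase μ ω γ δ₀ := by
    have hsplit : (-μ - ω * I) * t₂ = (-μ * t₂ : ℝ) + -(θ * I) := by
      have hωC : (ω : ℂ) ≠ 0 := ofReal_ne_zero.mpr hω.ne'
      simp only [t₂]; push_cast; field_simp; ring
    rw [hflow, hu0, hu'0, smul_eq_mul, hsplit, exp_add, mul_assoc, hrot, ← ofReal_exp]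
    push_cast; ring
  obtain ⟨hx, hv⟩ := eq_mul_of_dampedPhase_eq hω.ne' hphase
  exact ⟨_, t₂, by positivity, by positivity, div_le_div_of_nonneg_right hθ2π hω.le, hx, hv⟩

/-- Phase-space rotation with subcritical constant damping: the solution with
data `(α,β) ≠ 0` reaches a positive multiple of any nonzero `(γ,δ₀)` within
time `2π/√(ε(2λ−ε))`. -/
theorem stmt_13 (lam ε : ℝ) (hlam : 0 < lam) (hε : 0 < ε) (hεlam : ε < lam)
    (α β γ δ₀ : ℝ) (hαβ : α ^ 2 + β ^ 2 ≠ 0) (hγδ : γ ^ 2 + δ₀ ^ 2 ≠ 0)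
    (u : ℝ → ℝ) (hu : ContDiff ℝ 2 u)
    (hode : ∀ t,
      deriv (deriv u) t + 2 * (lam - ε) * deriv u t + lam ^ 2 * u t = 0)
    (hu0 : u 0 = α) (hu'0 : deriv u 0 = β) :
    ∃ r t₂ : ℝ, 0 < r ∧ 0 < t₂ ∧
      t₂ ≤ 2 * Real.pi / Real.sqrt (ε * (2 * lam - ε)) ∧
      u t₂ = r * γ ∧ deriv u t₂ = r * δ₀ :=
  stmt_13_general lam ε hε hεlam α β γ δ₀ hαβ hγδ u hu hode hu0 hu'0
end

section
/- Supercritical energy reduction: let λ > 0, M > 0, ε ∈ (0,λ), t₁ = M/(2ε) + 2/λ, and δ(t) = λ + εt on [0,t₁]. Then there exists a nonzero solution v of v'' + 2δ(t)v' + λ²v = 0 on [0,t₁] such that |v'(t₁)|² + λ²|v(t₁)|² ≤ (|v'(0)|² + λ²|v(0)|²)·e^{−M t₁}. -/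
/-!
The solution is prescribed at the right endpoint, `v t₁ = 1`, `v' t₁ = -(λ + 2εt₁) v t₁`, and
estimated backwards in time. Writing `D = d/dt`, the equation factors as
`(D + λ)(D + λ + 2εt) v = 2ε(λt + 1) v`. Hence, with `p = -(D + λ + 2εt) v` (`flux`),
`(e^{λt} p)' = -2ε(λt + 1) e^{λt} v` and `(e^{λt + εt²} v)' = -e^{λt + εt²} p`.
As long as `v ≥ 0` on `[c, t₁]`, the first identity keeps `p ≥ 0` there (since `p t₁ = 0`) and the
second then gives `v c ≥ e^{λ(t₁ - c) + ε(t₁² - c²)} > 0`; so `v > 0` on all of `[0, t₁]`,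
`v 0 ≥ e^{λt₁ + εt₁²}` and `-v' 0 ≥ λ v 0`. The initial energy is therefore at least
`2λ² e^{2(λt₁ + εt₁²)}`, and the choice of `t₁` makes this dominate `e^{Mt₁}` times the final
energy `(λ + 2εt₁)² + λ²`.

The solution itself comes from Picard iteration for the first-order companion system `x' = A t x`
on `[a, b]`: the `n`-th iterate of the Picard operator is `(K(b - a))ⁿ/n!`-Lipschitz for
`K ≥ ‖A t‖`, so some iterate contracts.
-/

open Set Filter MeasureTheory Topology Interval Real
open scoped Nat

namespace LinearODE

variable {E : Type*} [NormedAddCommGroup E] [NormedSpace ℝ E] [CompleteSpace E]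
  (A : C(ℝ, E →L[ℝ] E)) {a b : ℝ} (hab : a ≤ b) (t₀ : ℝ) (x₀ : E)

lemma hasDerivAt_picard {β : ℝ → E} (hβ : Continuous β) (t : ℝ) :
    HasDerivAt (ODE.picard (A ·) t₀ x₀ β) (A t (β t)) t :=
  ((A.continuous.clm_apply hβ).integral_hasStrictDerivAt t₀ t).hasDerivAt.const_add x₀

noncomputable def picardOp (α : C(Icc a b, E)) : C(Icc a b, E) :=
  ContinuousMap.restrict (Icc a b)
    ⟨ODE.picard (A ·) t₀ x₀ (IccExtend hab α), continuous_iff_continuousAt.2 fun t =>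
      (hasDerivAt_picard A t₀ x₀ α.continuous.Icc_extend' t).continuousAt⟩

lemma picardOp_apply (α : C(Icc a b, E)) (t : Icc a b) :
    picardOp A hab t₀ x₀ α t = x₀ + ∫ s in t₀..t, A s (IccExtend hab α s) := rfl

variable {A t₀} {K : ℝ}

lemma dist_iterate_picardOp_apply_le (hK : ∀ s ∈ Icc a b, ‖A s‖ ≤ K) (ht₀ : t₀ ∈ Icc a b)
    (α β : C(Icc a b, E)) (n : ℕ) (t : Icc a b) :
    dist ((picardOp A hab t₀ x₀)^[n] α t) ((picardOp A hab t₀ x₀)^[n] β t) ≤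
      (K * |t - t₀|) ^ n / n ! * dist α β := by
  induction n generalizing t with
  | zero => simpa using ContinuousMap.dist_apply_le_dist (f := α) (g := β) t
  | succ n ih =>
    set T := picardOp A hab t₀ x₀
    set α' := IccExtend hab (T^[n] α)
    set β' := IccExtend hab (T^[n] β)
    have hsub : Ι t₀ t ⊆ Icc a b := uIoc_subset_uIcc.trans (uIcc_subset_Icc ht₀ t.2)
    have hint : ∀ γ : C(Icc a b, E), IntervalIntegrable (fun s => A s (IccExtend hab γ s))
        volume t₀ t := fun γ =>
      (A.continuous.clm_apply γ.continuous.Icc_extend').intervalIntegrable _ _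
    have hbound : ∀ s ∈ Ι t₀ t, ‖A s (α' s) - A s (β' s)‖ ≤
        K ^ (n + 1) / n ! * dist α β * |s - t₀| ^ n := by
      intro s hs
      have hs' := hsub hs
      have hK0 : 0 ≤ K := (norm_nonneg _).trans (hK s hs')
      calc ‖A s (α' s) - A s (β' s)‖ = ‖A s (α' s - β' s)‖ := by rw [map_sub]
        _ ≤ K * dist (α' s) (β' s) :=
          ((A s).le_opNorm _).trans (by rw [dist_eq_norm]; gcongr; exact hK s hs')
        _ ≤ K * ((K * |s - t₀|) ^ n / n ! * dist α β) := by
          gcongr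
          simpa [α', β', IccExtend_of_mem hab _ hs'] using ih ⟨s, hs'⟩
        _ = K ^ (n + 1) / n ! * dist α β * |s - t₀| ^ n := by ring
    rw [Function.iterate_succ_apply', Function.iterate_succ_apply', dist_eq_norm,
      picardOp_apply, picardOp_apply, add_sub_add_left_eq_sub,
      ← intervalIntegral.integral_sub (hint _) (hint _), intervalIntegral.norm_intervalIntegral_eq]
    calc _ ≤ ∫ s in Ι t₀ t, K ^ (n + 1) / n ! * dist α β * |s - t₀| ^ n :=
          norm_integral_le_of_norm_le (Continuous.integrableOn_uIoc (by fun_prop))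
            ((ae_restrict_mem measurableSet_uIoc).mono hbound)
      _ = (K * |t - t₀|) ^ (n + 1) / (n + 1)! * dist α β := by
        rw [integral_const_mul, integral_pow_abs_sub_uIoc, Nat.factorial_succ]
        push_cast
        field_simp
        ring

lemma dist_iterate_picardOp_le (hK : ∀ s ∈ Icc a b, ‖A s‖ ≤ K) (ht₀ : t₀ ∈ Icc a b)
    (α β : C(Icc a b, E)) (n : ℕ) :
    dist ((picardOp A hab t₀ x₀)^[n] α) ((picardOp A hab t₀ x₀)^[n] β) ≤
      (K * (b - a)) ^ n / n ! * dist α β := by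
  have hK0 : 0 ≤ K := (norm_nonneg _).trans (hK t₀ ht₀)
  refine (ContinuousMap.dist_le (by have := ht₀.1.trans ht₀.2; positivity)).2 fun t => ?_
  refine (dist_iterate_picardOp_apply_le hab x₀ hK ht₀ α β n t).trans ?_
  gcongr
  exact abs_sub_le_of_le_of_le t.2.1 t.2.2 ht₀.1 ht₀.2

lemma exists_isFixedPt_picardOp (ht₀ : t₀ ∈ Icc a b) :
    ∃ α, Function.IsFixedPt (picardOp A hab t₀ x₀) α := by
  obtain ⟨K, hK⟩ := isCompact_Icc.exists_bound_of_continuousOn A.continuous.continuousOn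
  have hK0 : 0 ≤ K := (norm_nonneg _).trans (hK t₀ ht₀)
  obtain ⟨n, hn⟩ := (FloorSemiring.tendsto_pow_div_factorial_atTop (K * (b - a))).eventually
    (gt_mem_nhds one_pos) |>.exists
  have hC : 0 ≤ (K * (b - a)) ^ n / n ! := by have := ht₀.1.trans ht₀.2; positivity
  have hcontr : ContractingWith ⟨_, hC⟩ (picardOp A hab t₀ x₀)^[n] :=
    ⟨hn, LipschitzWith.of_dist_le_mul fun α β => dist_iterate_picardOp_le hab x₀ hK ht₀ α β n⟩
  exact ⟨_, hcontr.isFixedPt_fixedPoint_iterate⟩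

end LinearODE

open LinearODE in
theorem exists_hasDerivAt_linearODE {E : Type*} [NormedAddCommGroup E] [NormedSpace ℝ E]
    [CompleteSpace E] (A : C(ℝ, E →L[ℝ] E)) {a b t₀ : ℝ} (ht₀ : t₀ ∈ Icc a b) (x₀ : E) :
    ∃ X X' : ℝ → E, Continuous X' ∧ (∀ t, HasDerivAt X (X' t) t) ∧ X t₀ = x₀ ∧
      ∀ t ∈ Icc a b, X' t = A t (X t) := by
  have hab : a ≤ b := ht₀.1.trans ht₀.2
  obtain ⟨α, hα⟩ := exists_isFixedPt_picardOp (A := A) hab x₀ ht₀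
  refine ⟨ODE.picard (A ·) t₀ x₀ (IccExtend hab α), fun t => A t (IccExtend hab α t),
    A.continuous.clm_apply α.continuous.Icc_extend',
    hasDerivAt_picard A t₀ x₀ α.continuous.Icc_extend', ODE.picard_apply₀, fun t ht => ?_⟩
  change A t (IccExtend hab α t) = _
  rw [IccExtend_of_mem hab _ ht]
  exact congrArg (A t) (DFunLike.congr_fun hα ⟨t, ht⟩).symm

open ContinuousLinearMap in
/-- The companion matrix of `y'' + p y' + q y = 0`, acting on `(y, y')`. -/
def companion (p q : ℝ) : ℝ × ℝ →L[ℝ] ℝ × ℝ :=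
  (snd ℝ ℝ ℝ).prod (-p • snd ℝ ℝ ℝ - q • fst ℝ ℝ ℝ)

theorem exists_contDiff_secondOrderLinearODE {p q : ℝ → ℝ} (hp : Continuous p)
    (hq : Continuous q) {a b t₀ : ℝ} (ht₀ : t₀ ∈ Icc a b) (y₀ y₁ : ℝ) :
    ∃ v : ℝ → ℝ, ContDiff ℝ 2 v ∧ v t₀ = y₀ ∧ deriv v t₀ = y₁ ∧
      ∀ t ∈ Icc a b, deriv (deriv v) t + p t * deriv v t + q t * v t = 0 := by
  let A : C(ℝ, ℝ × ℝ →L[ℝ] ℝ × ℝ) := ⟨fun t => companion (p t) (q t),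
    (ContinuousLinearMap.prodₗᵢ ℝ).continuous.comp (continuous_const.prodMk (by fun_prop))⟩
  obtain ⟨X, X', hX'c, hX, hX₀, hXeq⟩ := exists_hasDerivAt_linearODE A ht₀ (y₀, y₁)
  have hXc : Continuous X := continuous_iff_continuousAt.2 fun t => (hX t).continuousAt
  have hX₁ : ∀ t, HasDerivAt (fun s => (X s).1) (X' t).1 t := fun t =>
    (hasFDerivAt_fst (𝕜 := ℝ) (p := X t)).comp_hasDerivAt t (hX t)
  have hX₂ : ∀ t, HasDerivAt (fun s => (X s).2) (X' t).2 t := fun t =>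
    (hasFDerivAt_snd (𝕜 := ℝ) (p := X t)).comp_hasDerivAt t (hX t)
  -- `(X t).1` need not be twice differentiable at `a` and `b`; the primitive of `(X t).2` is.
  set v : ℝ → ℝ := fun t => y₀ + ∫ s in t₀..t, (X s).2
  have hv : deriv v = fun t => (X t).2 := funext fun t =>
    ((hXc.snd.integral_hasStrictDerivAt t₀ t).hasDerivAt.const_add y₀).deriv
  have hv' : deriv (deriv v) = fun t => (X' t).2 := by
    rw [hv]; exact funext fun t => (hX₂ t).deriv
  have hXv : ∀ t ∈ Icc a b, v t = (X t).1 := by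
    intro t ht
    have h := intervalIntegral.integral_eq_sub_of_hasDerivAt (a := t₀) (b := t)
      (f := fun s => (X s).1) (f' := fun s => (X s).2) (fun s hs => ?_)
      (hXc.snd.intervalIntegrable _ _)
    · simp only [v, h, hX₀]; ring
    · have := hX₁ s
      rwa [hXeq s (uIcc_subset_Icc ht₀ ht hs)] at this
  refine ⟨v, ?_, by simp [v], by simp [hv, hX₀], fun t ht => ?_⟩
  · rw [show (2 : WithTop ℕ∞) = 1 + 1 from rfl, contDiff_succ_iff_deriv]
    refine ⟨fun t => ?_, by simp, ?_⟩
    · exact (hXc.snd.integral_hasStrictDerivAt t₀ t).hasDerivAt.const_add y₀ |>.differentiableAt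
    · rw [hv, contDiff_one_iff_deriv]
      exact ⟨fun t => (hX₂ t).differentiableAt, by rw [← hv, hv']; exact hX'c.snd⟩
  · rw [hv', hv]
    beta_reduce
    rw [hXv t ht, hXeq t ht]
    simp [A, companion]
    ring

lemma antitoneOn_Icc_of_hasDerivAt_nonpos {f f' : ℝ → ℝ} {a b : ℝ}
    (hf : ∀ x ∈ Icc a b, HasDerivAt f (f' x) x) (hf' : ∀ x ∈ Icc a b, f' x ≤ 0) :
    AntitoneOn f (Icc a b) :=
  antitoneOn_of_hasDerivWithinAt_nonpos (convex_Icc a b)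
    (fun x hx => (hf x hx).continuousAt.continuousWithinAt)
    (fun x hx => (hf x (interior_subset hx)).hasDerivWithinAt)
    (fun x hx => hf' x (interior_subset hx))

lemma pos_of_forall_nonneg_Icc_imp_pos {v : ℝ → ℝ} {a b : ℝ} (hv : ContinuousOn v (Icc a b))
    (hb : 0 < v b) (h : ∀ c ∈ Icc a b, (∀ x ∈ Icc c b, 0 ≤ v x) → 0 < v c) :
    ∀ x ∈ Icc a b, 0 < v x := by
  by_contra! ⟨x, hx, hvx⟩
  set S := Icc a b ∩ v ⁻¹' Iic 0
  have hSc : IsClosed S := hv.preimage_isClosed_of_isClosed isClosed_Icc isClosed_Iic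
  have hSb : BddAbove S := bddAbove_Icc.mono inter_subset_left
  obtain ⟨hc, hvc⟩ : sSup S ∈ S := hSc.csSup_mem ⟨x, hx, hvx⟩ hSb
  set c := sSup S
  have hright : ∀ y ∈ Ioc c b, 0 < v y := fun y hy => by
    by_contra! hvy
    exact (le_csSup hSb ⟨⟨hc.1.trans hy.1.le, hy.2⟩, hvy⟩).not_gt hy.1
  have hcb : c < b := hc.2.lt_of_ne fun h => (h ▸ hvc : v b ≤ 0).not_gt hb
  have : NeBot (𝓝[Ioc c b] c) := left_nhdsWithin_Ioc_neBot hcb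
  have hvc' : 0 ≤ v c :=
    ge_of_tendsto ((hv c hc).mono (Ioc_subset_Icc_self.trans (Icc_subset_Icc hc.1 le_rfl)))
      (eventually_nhdsWithin_of_forall fun y hy => (hright y hy).le)
  refine (h c hc fun y hy => ?_).not_ge hvc
  rcases hy.1.eq_or_lt with rfl | hcy
  exacts [hvc', (hright y ⟨hcy, hy.2⟩).le]

namespace DampedOscillator

variable {lam ε t₁ c : ℝ} {v : ℝ → ℝ}

lemma hasDerivAt_exp_mul_flux (hv : Differentiable ℝ v) (hv' : Differentiable ℝ (deriv v)) {t : ℝ}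
    (hode : deriv (deriv v) t + 2 * (lam + ε * t) * deriv v t + lam ^ 2 * v t = 0) :
    HasDerivAt (fun s => exp (lam * s) * (-deriv v s - (lam + 2 * ε * s) * v s))
      (-(2 * ε * (lam * t + 1) * exp (lam * t) * v t)) t := by
  have hexp := ((hasDerivAt_id t).const_mul lam).exp
  have hlin := ((hasDerivAt_id t).const_mul (2 * ε)).const_add lam
  refine (hexp.mul ((hv' t).hasDerivAt.neg.sub (hlin.mul (hv t).hasDerivAt))).congr_deriv ?_
  simp only [id, Pi.mul_apply, Pi.sub_apply, Pi.neg_apply]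
  linear_combination (-exp (lam * t)) * hode

lemma hasDerivAt_exp_quadratic_mul (hv : Differentiable ℝ v) (t : ℝ) :
    HasDerivAt (fun s => exp (lam * s + ε * s ^ 2) * v s)
      (-(exp (lam * t + ε * t ^ 2) * (-deriv v t - (lam + 2 * ε * t) * v t))) t := by
  have hexp := (((hasDerivAt_id t).const_mul lam).add ((hasDerivAt_pow 2 t).const_mul ε)).exp
  refine (hexp.mul (hv t).hasDerivAt).congr_deriv ?_
  simp only [id, Pi.add_apply]
  ring

noncomputable def flux (lam ε : ℝ) (v : ℝ → ℝ) (t : ℝ) : ℝ := -deriv v t - (lam + 2 * ε * t) * v t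

lemma flux_nonneg_of_nonneg (hlam : 0 ≤ lam) (hε : 0 ≤ ε) (hc : 0 ≤ c)
    (hv : Differentiable ℝ v) (hv' : Differentiable ℝ (deriv v))
    (hode : ∀ t ∈ Icc c t₁, deriv (deriv v) t + 2 * (lam + ε * t) * deriv v t + lam ^ 2 * v t = 0)
    (hnonneg : ∀ t ∈ Icc c t₁, 0 ≤ v t) (hend : 0 ≤ flux lam ε v t₁) :
    ∀ s ∈ Icc c t₁, 0 ≤ flux lam ε v s := by
  intro s hs
  have hanti := antitoneOn_Icc_of_hasDerivAt_nonpos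
    (fun t ht => hasDerivAt_exp_mul_flux hv hv' (hode t ht)) fun t ht => by
      have := hnonneg t ht
      have : 0 ≤ t := hc.trans ht.1
      rw [neg_nonpos]
      positivity
  have := hanti hs ⟨hs.1.trans hs.2, le_rfl⟩ hs.2
  exact (mul_nonneg_iff_of_pos_left (exp_pos (lam * s))).1
    ((mul_nonneg (exp_pos _).le hend).trans this)

lemma exp_mul_le_of_flux_nonneg (hv : Differentiable ℝ v) (hct : c ≤ t₁)
    (hflux : ∀ s ∈ Icc c t₁, 0 ≤ flux lam ε v s) :
    exp (lam * t₁ + ε * t₁ ^ 2) * v t₁ ≤ exp (lam * c + ε * c ^ 2) * v c := by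
  refine antitoneOn_Icc_of_hasDerivAt_nonpos (fun t _ => hasDerivAt_exp_quadratic_mul hv t)
    (fun t ht => ?_) ⟨le_rfl, hct⟩ ⟨hct, le_rfl⟩ hct
  have := hflux t ht
  rw [neg_nonpos]
  exact mul_nonneg (exp_pos _).le this

lemma pos_of_flux_nonneg (hlam : 0 ≤ lam) (hε : 0 ≤ ε)
    (hv : Differentiable ℝ v) (hv' : Differentiable ℝ (deriv v))
    (hode : ∀ t ∈ Icc 0 t₁, deriv (deriv v) t + 2 * (lam + ε * t) * deriv v t + lam ^ 2 * v t = 0)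
    (hpos : 0 < v t₁) (hend : 0 ≤ flux lam ε v t₁) :
    ∀ t ∈ Icc 0 t₁, 0 < v t := by
  refine pos_of_forall_nonneg_Icc_imp_pos hv.continuous.continuousOn hpos fun c hc hnonneg => ?_
  have hflux := flux_nonneg_of_nonneg hlam hε hc.1 hv hv'
    (fun t ht => hode t ⟨hc.1.trans ht.1, ht.2⟩) hnonneg hend
  have := exp_mul_le_of_flux_nonneg hv hc.2 hflux
  have hend_pos : 0 < exp (lam * t₁ + ε * t₁ ^ 2) * v t₁ := by positivity
  exact pos_of_mul_pos_right (hend_pos.trans_le this) (exp_pos _).le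

lemma pos_at_zero_and_energy_ge (hlam : 0 < lam) (hε : 0 ≤ ε) (ht₁ : 0 ≤ t₁)
    (hv : Differentiable ℝ v) (hv' : Differentiable ℝ (deriv v))
    (hode : ∀ t ∈ Icc 0 t₁, deriv (deriv v) t + 2 * (lam + ε * t) * deriv v t + lam ^ 2 * v t = 0)
    (hpos : 0 < v t₁) (hend : 0 ≤ flux lam ε v t₁) :
    0 < v 0 ∧ 2 * lam ^ 2 * exp (2 * (lam * t₁ + ε * t₁ ^ 2)) * v t₁ ^ 2 ≤
      deriv v 0 ^ 2 + lam ^ 2 * v 0 ^ 2 := by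
  have hpos' := pos_of_flux_nonneg hlam.le hε hv hv' hode hpos hend
  have hflux := flux_nonneg_of_nonneg hlam.le hε le_rfl hv hv' hode
    (fun t ht => (hpos' t ht).le) hend
  have hv0 : exp (lam * t₁ + ε * t₁ ^ 2) * v t₁ ≤ v 0 := by
    simpa using exp_mul_le_of_flux_nonneg hv ht₁ hflux
  have hv'0 : lam * v 0 ≤ -deriv v 0 := by
    have := hflux 0 ⟨le_rfl, ht₁⟩
    simp only [flux] at this
    linarith
  have hv0pos : 0 < v 0 := hpos' 0 ⟨le_rfl, ht₁⟩
  refine ⟨hv0pos, ?_⟩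
  have hsq : exp (2 * (lam * t₁ + ε * t₁ ^ 2)) * v t₁ ^ 2 =
      (exp (lam * t₁ + ε * t₁ ^ 2) * v t₁) ^ 2 := by
    rw [mul_pow, ← exp_nat_mul]; norm_num
  rw [mul_assoc, hsq]
  nlinarith [pow_le_pow_left₀ (by positivity) hv0 2, mul_pos hlam hv0pos]

lemma sq_add_sq_le_exp {lam M ε t₁ : ℝ} (hlam : 0 < lam) (hM : 0 < M) (hε : 0 < ε)
    (ht₁ : t₁ = M / (2 * ε) + 2 / lam) :
    (lam + 2 * ε * t₁) ^ 2 + lam ^ 2 ≤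
      2 * lam ^ 2 * exp (2 * (lam * t₁ + ε * t₁ ^ 2) - M * t₁) := by
  have ht₁pos : 0 < t₁ := by rw [ht₁]; positivity
  set b := ε * t₁ / lam
  have hb : 0 ≤ b := by positivity
  have hexponent : 2 * (lam * t₁ + ε * t₁ ^ 2) - M * t₁ = 2 * (lam * t₁) + 4 * b := by
    simp only [b, ht₁]; field_simp; ring
  have hlt₁ : 4 ≤ 2 * (lam * t₁) := by
    have : 0 ≤ lam * M / (2 * ε) := by positivity
    have : lam * t₁ = lam * M / (2 * ε) + 2 := by rw [ht₁]; field_simp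
    linarith
  have hbase : lam + 2 * ε * t₁ = lam * (1 + 2 * b) := by simp only [b]; field_simp
  have hexp : 1 + (4 + 4 * b) + (4 + 4 * b) ^ 2 / 2 ≤ exp (2 * (lam * t₁) + 4 * b) :=
    (quadratic_le_exp_of_nonneg (by positivity)).trans (exp_le_exp.2 (by linarith))
  rw [hexponent, hbase]
  nlinarith [sq_nonneg lam, mul_nonneg (sq_nonneg lam) hb, mul_nonneg (sq_nonneg lam) (sq_nonneg b)]

end DampedOscillator

open DampedOscillator

theorem stmt_15_general (lam M ε : ℝ) (hlam : 0 < lam) (hM : 0 < M)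
    (hε : 0 < ε) :
    let t₁ := M / (2 * ε) + 2 / lam
    ∃ v : ℝ → ℝ, ContDiff ℝ 2 v ∧
      (∀ t ∈ Set.Icc (0:ℝ) t₁,
        deriv (deriv v) t + 2 * (lam + ε * t) * deriv v t + lam ^ 2 * v t = 0) ∧
      (v 0) ^ 2 + (deriv v 0) ^ 2 ≠ 0 ∧
      (deriv v t₁) ^ 2 + lam ^ 2 * (v t₁) ^ 2 ≤
        ((deriv v 0) ^ 2 + lam ^ 2 * (v 0) ^ 2) * Real.exp (-M * t₁) := by
  intro t₁
  have ht₁ : 0 < t₁ := by positivity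
  obtain ⟨v, hv, hvt₁, hv't₁, hode⟩ := exists_contDiff_secondOrderLinearODE
    (p := fun t => 2 * (lam + ε * t)) (q := fun _ => lam ^ 2) (by fun_prop) continuous_const
    ⟨ht₁.le, le_rfl⟩ 1 (-(lam + 2 * ε * t₁))
  have hend : flux lam ε v t₁ = 0 := by simp only [flux, hvt₁, hv't₁]; ring
  obtain ⟨hv0, henergy⟩ := pos_at_zero_and_energy_ge hlam hε.le ht₁.le
    (hv.differentiable (by norm_num)) hv.differentiable_deriv_two hode (by simp [hvt₁]) hend.ge
  refine ⟨v, hv, hode, by positivity, ?_⟩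
  rw [hvt₁, one_pow, mul_one] at henergy
  calc deriv v t₁ ^ 2 + lam ^ 2 * v t₁ ^ 2 = (lam + 2 * ε * t₁) ^ 2 + lam ^ 2 := by
        rw [hvt₁, hv't₁]; ring
    _ ≤ 2 * lam ^ 2 * exp (2 * (lam * t₁ + ε * t₁ ^ 2) - M * t₁) := sq_add_sq_le_exp hlam hM hε rfl
    _ = 2 * lam ^ 2 * exp (2 * (lam * t₁ + ε * t₁ ^ 2)) * exp (-M * t₁) := by
        rw [mul_assoc _ (exp _), ← exp_add, sub_eq_add_neg, neg_mul]
    _ ≤ _ := by gcongr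

/-- Supercritical energy reduction: with `δ(t) = λ + εt` on `[0,t₁]`,
`t₁ = M/(2ε) + 2/λ`, there is a nonzero solution whose energy is reduced by
a factor `e^{−Mt₁}`. -/
theorem stmt_15 (lam M ε : ℝ) (hlam : 0 < lam) (hM : 0 < M)
    (hε : 0 < ε) (hεlam : ε < lam) :
    let t₁ := M / (2 * ε) + 2 / lam
    ∃ v : ℝ → ℝ, ContDiff ℝ 2 v ∧
      (∀ t ∈ Set.Icc (0:ℝ) t₁,
        deriv (deriv v) t + 2 * (lam + ε * t) * deriv v t + lam ^ 2 * v t = 0) ∧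
      (v 0) ^ 2 + (deriv v 0) ^ 2 ≠ 0 ∧
      (deriv v t₁) ^ 2 + lam ^ 2 * (v t₁) ^ 2 ≤
        ((deriv v 0) ^ 2 + lam ^ 2 * (v 0) ^ 2) * Real.exp (-M * t₁) :=
  stmt_15_general lam M ε hlam hM hε
end

section
/- Key inequality for slowly varying damping: let λ > 0, ε ∈ (0,λ), M > 0, and t₁ = M/(2ε) + 2/λ. Then (3λ² + 8ε²t₁²)·exp(−2λt₁ − 2εt₁²) ≤ 2λ²·exp(−Mt₁). -/
/-- Key inequality for slowly varying damping. -/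
theorem stmt_17 (lam ε M : ℝ) (hlam : 0 < lam) (hε : 0 < ε)
    (hεlam : ε < lam) (hM : 0 < M) :
    let t₁ := M / (2 * ε) + 2 / lam
    (3 * lam ^ 2 + 8 * ε ^ 2 * t₁ ^ 2) *
        Real.exp (-2 * lam * t₁ - 2 * ε * t₁ ^ 2) ≤
      2 * lam ^ 2 * Real.exp (-M * t₁) := by
  intro t₁
  have ht₁ : t₁ = M / (2 * ε) + 2 / lam := rfl
  have ht₁pos : 0 < t₁ := by rw [ht₁]; positivity
  set B : ℝ := 4 * ε * t₁ / lam with hBdef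
  have hBpos : 0 < B := by positivity
  have hcoef : 3 * lam ^ 2 + 8 * ε ^ 2 * t₁ ^ 2 = lam ^ 2 * (3 + B ^ 2 / 2) := by
    rw [hBdef]; field_simp; ring
  have hexp : -2 * lam * t₁ - 2 * ε * t₁ ^ 2 = -M * t₁ + (-(2 * lam * t₁) - B) := by
    rw [hBdef, ht₁]; field_simp; ring
  have hx : 2 ≤ lam * t₁ := by
    have h : lam * t₁ = lam * M / (2 * ε) + 2 := by
      rw [ht₁]; field_simp
    have h2 : 0 < lam * M / (2 * ε) := by positivity
    rw [h]; linarith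
  have h1 : (5 : ℝ) ≤ Real.exp (2 * lam * t₁) := by
    have := Real.add_one_le_exp (2 * lam * t₁)
    linarith
  have h2 : 1 + B + B ^ 2 / 4 ≤ Real.exp B := by
    have hh : Real.exp B = Real.exp (B / 2) * Real.exp (B / 2) := by
      rw [← Real.exp_add]; ring_nf
    have h3 : 1 + B / 2 ≤ Real.exp (B / 2) := by
      have := Real.add_one_le_exp (B / 2); linarith
    have h4 : (1 + B / 2) * (1 + B / 2) ≤ Real.exp (B / 2) * Real.exp (B / 2) := by
      have := (Real.exp_pos (B / 2)).le
      nlinarith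
    nlinarith
  have hmain : 3 + B ^ 2 / 2 ≤ 2 * Real.exp (2 * lam * t₁ + B) := by
    rw [Real.exp_add]
    have hEB : 0 < Real.exp B := Real.exp_pos B
    nlinarith [mul_le_mul h1 h2 (by nlinarith) (by positivity)]
  rw [hcoef, hexp, Real.exp_add]
  have hE : Real.exp (-(2 * lam * t₁) - B) * Real.exp (2 * lam * t₁ + B) = 1 := by
    rw [← Real.exp_add]; ring_nf; exact Real.exp_zero
  have hEpos : 0 < Real.exp (-(2 * lam * t₁) - B) := Real.exp_pos _
  have hfin : (3 + B ^ 2 / 2) * Real.exp (-(2 * lam * t₁) - B) ≤ 2 := by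
    calc (3 + B ^ 2 / 2) * Real.exp (-(2 * lam * t₁) - B)
        ≤ 2 * Real.exp (2 * lam * t₁ + B) * Real.exp (-(2 * lam * t₁) - B) :=
          mul_le_mul_of_nonneg_right hmain hEpos.le
      _ = 2 := by rw [mul_assoc, mul_comm (Real.exp (2 * lam * t₁ + B)), hE, mul_one]
  have hM1pos : 0 < Real.exp (-M * t₁) := Real.exp_pos _
  calc lam ^ 2 * (3 + B ^ 2 / 2) * (Real.exp (-M * t₁) * Real.exp (-(2 * lam * t₁) - B))
      = ((3 + B ^ 2 / 2) * Real.exp (-(2 * lam * t₁) - B)) * (lam ^ 2 * Real.exp (-M * t₁)) := by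
        ring
    _ ≤ 2 * (lam ^ 2 * Real.exp (-M * t₁)) := by
        apply mul_le_mul_of_nonneg_right hfin; positivity
    _ = 2 * lam ^ 2 * Real.exp (-M * t₁) := by ring
end
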